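/- arXiv:2605.28709 — 2 statements merged into one kernel-verified Lean document; each statement's English description precedes it below -/
import Mathlib

section
/- Let n ≥ 2, let A ⊆ S^{n−1} be Borel measurable, symmetric (A = −A), and avoiding orthogonality, and let X = {x₁, −x₁, …, x_N, −x_N} ⊆ S^{n−1} be a finite symmetric set. Then for every i ∈ {1, …, N}, the sum of a_X(I) over all independent sets I of G_X with i ∈ I equals δ(A). -/
open MeasureTheory Metric Finset
open scoped RealInnerProductSpace ENNReal Classical

noncomputable section

/-- The Borel measurable-space structure on `n × n` real matrices. -/
instance matrixMeasurableSpace (n : ℕ) : MeasurableSpace (Matrix (Fin n) (Fin n) ℝ) := borel _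

/-- The orthogonal group `O(n)`, as the group of `n × n` orthogonal real matrices. -/
abbrev OrthGroup (n : ℕ) := Matrix.orthogonalGroup (Fin n) ℝ

/-- The natural action of an orthogonal matrix `T ∈ O(n)` on a vector `x ∈ ℝⁿ`. -/
def act {n : ℕ} (T : OrthGroup n) (x : EuclideanSpace ℝ (Fin n)) : EuclideanSpace ℝ (Fin n) :=
  Matrix.toEuclideanLin (T : Matrix (Fin n) (Fin n) ℝ) x

/-- The unit sphere `S^{n-1} = {x ∈ ℝⁿ : ‖x‖ = 1}`. -/
def unitSphere (n : ℕ) : Set (EuclideanSpace ℝ (Fin n)) := {x | ‖x‖ = 1}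

/-- A set `A ⊆ ℝⁿ` avoids orthogonality if `⟪a, a'⟫ ≠ 0` for all `a, a' ∈ A`. -/
def AvoidsOrthogonality {n : ℕ} (A : Set (EuclideanSpace ℝ (Fin n))) : Prop :=
  ∀ a ∈ A, ∀ a' ∈ A, ⟪a, a'⟫ ≠ 0

/-- The density `δ(A)` of a subset `A` of the unit sphere: its surface measure divided by
the total surface measure of the sphere. -/
def density (n : ℕ) (A : Set (EuclideanSpace ℝ (Fin n))) : ℝ :=
  ((volume : Measure (EuclideanSpace ℝ (Fin n))).toSphere
      (((↑) : sphere (0 : EuclideanSpace ℝ (Fin n)) 1 → EuclideanSpace ℝ (Fin n)) ⁻¹' A)).toReal /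
  ((volume : Measure (EuclideanSpace ℝ (Fin n))).toSphere Set.univ).toReal

/-- The Legendre polynomials, normalized so that `legendre k 1 = 1`:
`P₀ = 1`, `P₁(t) = t`, and `k·P_k(t) = (2k−1)·t·P_{k−1}(t) − (k−1)·P_{k−2}(t)` for `k ≥ 2`. -/
def legendre : ℕ → ℝ → ℝ
  | 0, _ => 1
  | 1, t => t
  | (k+2), t => ((2*(k:ℝ)+3) * t * legendre (k+1) t - ((k:ℝ)+1) * legendre k t) / ((k:ℝ)+2)

/-- `I` is an independent set of the orthogonality graph `G_X` of the symmetric set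
`X = {±x_1, …, ±x_N}`: no two distinct indices of `I` correspond to orthogonal points. -/
def IsIndependent {n N : ℕ} (x : Fin N → EuclideanSpace ℝ (Fin n)) (I : Finset (Fin N)) : Prop :=
  ∀ i ∈ I, ∀ j ∈ I, i ≠ j → ⟪x i, x j⟫ ≠ 0

/-- The set of points `{±x_i : i ∈ Y}`. -/
def pmSet {n N : ℕ} (x : Fin N → EuclideanSpace ℝ (Fin n)) (Y : Finset (Fin N)) :
    Set (EuclideanSpace ℝ (Fin n)) :=
  {v | ∃ i ∈ Y, v = x i ∨ v = -x i}

/-- `Y` and `Z` are geometrically congruent: some `S ∈ O(n)` maps `{±x_i : i ∈ Y}`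
onto `{±x_j : j ∈ Z}`. -/
def OrthCongruent {n N : ℕ} (x : Fin N → EuclideanSpace ℝ (Fin n)) (Y Z : Finset (Fin N)) : Prop :=
  ∃ S : OrthGroup n, act S '' pmSet x Y = pmSet x Z

/-- The atomic density `a_X(I) = μ{T ∈ O(n) : {i : x_i ∈ T(A)} = I}`. -/
def atomicDensity {n N : ℕ} (μ : Measure (OrthGroup n)) (A : Set (EuclideanSpace ℝ (Fin n)))
    (x : Fin N → EuclideanSpace ℝ (Fin n)) (I : Finset (Fin N)) : ℝ :=
  (μ {T : OrthGroup n | {i : Fin N | x i ∈ act T '' A} = (I : Set (Fin N))}).toReal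

/-- `Γ(G_X)`: the supremum of `Σ_{I ∋ 1} a(I)` over all probability distributions `a` on the
independent sets of `G_X` satisfying the geometric congruence constraints. -/
def Gamma (n N : ℕ) (hN : 0 < N) (x : Fin N → EuclideanSpace ℝ (Fin n)) : ℝ :=
  sSup {g : ℝ | ∃ a : Finset (Fin N) → ℝ,
    (∀ I, 0 ≤ a I) ∧
    (∀ I, ¬ IsIndependent x I → a I = 0) ∧
    (∑ I ∈ Finset.univ.filter (fun I => IsIndependent x I), a I) = 1 ∧
    (∀ Y Z : Finset (Fin N), OrthCongruent x Y Z →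
      (∑ I ∈ Finset.univ.filter (fun I => IsIndependent x I ∧ Y ⊆ I), a I) =
      (∑ I ∈ Finset.univ.filter (fun I => IsIndependent x I ∧ Z ⊆ I), a I)) ∧
    g = ∑ I ∈ Finset.univ.filter (fun I => IsIndependent x I ∧ (⟨0, hN⟩ : Fin N) ∈ I), a I}
set_option synthInstance.maxHeartbeats 1000000
set_option maxHeartbeats 1000000
open scoped Pointwise in
section
section ActAux

variable {n : ℕ}

instance matrixBorelSpace (n : ℕ) : BorelSpace (Matrix (Fin n) (Fin n) ℝ) := ⟨rfl⟩

lemma toEuclideanLin_mul_apply (A B : Matrix (Fin n) (Fin n) ℝ) (v : EuclideanSpace ℝ (Fin n)) :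
    Matrix.toEuclideanLin (A * B) v = Matrix.toEuclideanLin A (Matrix.toEuclideanLin B v) := by
  simp [Matrix.toEuclideanLin_apply, Matrix.mulVec_mulVec]

lemma toEuclideanLin_one_apply (v : EuclideanSpace ℝ (Fin n)) :
    Matrix.toEuclideanLin (1 : Matrix (Fin n) (Fin n) ℝ) v = v := by
  simp [Matrix.toEuclideanLin_apply]

lemma act_mul (S T : OrthGroup n) (v : EuclideanSpace ℝ (Fin n)) :
    act (S * T) v = act S (act T v) := by
  rw [act, act, act, ← toEuclideanLin_mul_apply]
  rfl

lemma act_one (v : EuclideanSpace ℝ (Fin n)) : act (1 : OrthGroup n) v = v := by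
  rw [act]
  exact toEuclideanLin_one_apply v

lemma act_inv_act (T : OrthGroup n) (v : EuclideanSpace ℝ (Fin n)) :
    act T⁻¹ (act T v) = v := by
  rw [← act_mul, inv_mul_cancel, act_one]

lemma act_act_inv (T : OrthGroup n) (v : EuclideanSpace ℝ (Fin n)) :
    act T (act T⁻¹ v) = v := by
  rw [← act_mul, mul_inv_cancel, act_one]

lemma inner_act (T : OrthGroup n) (a b : EuclideanSpace ℝ (Fin n)) :
    ⟪act T a, act T b⟫ = ⟪a, b⟫ := by
  have hT : star (T : Matrix (Fin n) (Fin n) ℝ) * (T : Matrix (Fin n) (Fin n) ℝ) = 1 :=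
    (Unitary.mem_iff.mp T.2).1
  have key : Matrix.toEuclideanLin ((T : Matrix (Fin n) (Fin n) ℝ).conjTranspose) (act T b) = b := by
    rw [act, ← toEuclideanLin_mul_apply, ← Matrix.star_eq_conjTranspose, hT,
      toEuclideanLin_one_apply]
  calc ⟪act T a, act T b⟫
      = ⟪a, LinearMap.adjoint (Matrix.toEuclideanLin (T : Matrix (Fin n) (Fin n) ℝ)) (act T b)⟫ :=
        (LinearMap.adjoint_inner_right _ _ _).symm
    _ = ⟪a, b⟫ := by rw [← Matrix.toEuclideanLin_conjTranspose_eq_adjoint, key]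

lemma mem_act_image {T : OrthGroup n} {A : Set (EuclideanSpace ℝ (Fin n))}
    {z : EuclideanSpace ℝ (Fin n)} : z ∈ act T '' A ↔ act T⁻¹ z ∈ A := by
  constructor
  · rintro ⟨a, ha, rfl⟩
    rwa [act_inv_act]
  · intro h
    exact ⟨act T⁻¹ z, h, act_act_inv T z⟩

/-- `act T` as a linear isometry equivalence. -/
def actIso (T : OrthGroup n) : EuclideanSpace ℝ (Fin n) ≃ₗᵢ[ℝ] EuclideanSpace ℝ (Fin n) :=
  LinearEquiv.isometryOfInner
    (LinearEquiv.ofLinear (Matrix.toEuclideanLin (T : Matrix (Fin n) (Fin n) ℝ))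
      (Matrix.toEuclideanLin ((T⁻¹ : OrthGroup n) : Matrix (Fin n) (Fin n) ℝ))
      (by
        apply LinearMap.ext
        intro v
        exact act_act_inv T v)
      (by
        apply LinearMap.ext
        intro v
        exact act_inv_act T v))
    (fun a b => inner_act T a b)

lemma actIso_apply (T : OrthGroup n) (v : EuclideanSpace ℝ (Fin n)) :
    actIso T v = act T v := rfl

/-- Every linear isometry equivalence of `ℝⁿ` is `act` of some orthogonal matrix. -/
lemma exists_orth_of_iso (f : EuclideanSpace ℝ (Fin n) ≃ₗᵢ[ℝ] EuclideanSpace ℝ (Fin n)) :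
    ∃ S : OrthGroup n, ∀ v, act S v = f v := by
  set M : Matrix (Fin n) (Fin n) ℝ :=
    Matrix.toEuclideanLin.symm (f.toLinearEquiv : EuclideanSpace ℝ (Fin n) →ₗ[ℝ] _) with hMdef
  have hM : Matrix.toEuclideanLin M
      = (f.toLinearEquiv : EuclideanSpace ℝ (Fin n) →ₗ[ℝ] EuclideanSpace ℝ (Fin n)) :=
    Matrix.toEuclideanLin.apply_symm_apply _
  have hMapp : ∀ v, Matrix.toEuclideanLin M v = f v := fun v => by rw [hM]; rfl
  have hmem : M ∈ Matrix.orthogonalGroup (Fin n) ℝ := by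
    rw [Matrix.mem_orthogonalGroup_iff']
    apply Matrix.toEuclideanLin.injective
    apply LinearMap.ext
    intro v
    rw [toEuclideanLin_mul_apply, toEuclideanLin_one_apply, hMapp]
    apply ext_inner_right ℝ
    intro y
    rw [← Matrix.conjTranspose_eq_transpose_of_trivial, Matrix.toEuclideanLin_conjTranspose_eq_adjoint,
      LinearMap.adjoint_inner_left, hMapp]
    exact f.inner_map_map v y
  exact ⟨⟨M, hmem⟩, fun v => hMapp v⟩

end ActAux

section MoreAux

variable {n : ℕ}

/-- Transitivity of the orthogonal group on the unit sphere. -/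
lemma exists_act_eq {x y : EuclideanSpace ℝ (Fin n)} (hx : ‖x‖ = 1) (hy : ‖y‖ = 1) :
    ∃ S : OrthGroup n, act S x = y := by
  obtain ⟨S, hS⟩ := exists_orth_of_iso (n := n)
    ((Submodule.reflection (ℝ ∙ (x - y))ᗮ : EuclideanSpace ℝ (Fin n) ≃ₗᵢ[ℝ] EuclideanSpace ℝ (Fin n)))
  refine ⟨S, ?_⟩
  rw [hS]
  exact Submodule.reflection_sub (by rw [hx, hy])

lemma coe_inv_orth (T : OrthGroup n) :
    ((T⁻¹ : OrthGroup n) : Matrix (Fin n) (Fin n) ℝ) = star (T : Matrix (Fin n) (Fin n) ℝ) := by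
  rw [← Unitary.star_eq_inv]
  rfl

lemma continuous_matrix_action :
    Continuous fun q : Matrix (Fin n) (Fin n) ℝ × EuclideanSpace ℝ (Fin n) =>
      Matrix.toEuclideanLin (star q.1) q.2 := by
  have h1 : Continuous fun q : Matrix (Fin n) (Fin n) ℝ × EuclideanSpace ℝ (Fin n) =>
      Matrix.mulVec (star q.1) ((WithLp.equiv 2 (Fin n → ℝ)) q.2) := by
    apply Continuous.matrix_mulVec
    · exact continuous_star.comp continuous_fst
    · exact (PiLp.continuous_ofLp 2 (fun _ : Fin n => ℝ)).comp continuous_snd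
  have := (PiLp.continuous_toLp 2 (fun _ : Fin n => ℝ)).comp h1
  exact this

lemma measurable_act_inv_pair :
    Measurable fun p : OrthGroup n × sphere (0 : EuclideanSpace ℝ (Fin n)) 1 =>
      act p.1⁻¹ (p.2 : EuclideanSpace ℝ (Fin n)) := by
  have h : (fun p : OrthGroup n × sphere (0 : EuclideanSpace ℝ (Fin n)) 1 =>
      act p.1⁻¹ (p.2 : EuclideanSpace ℝ (Fin n)))
      = (fun q : Matrix (Fin n) (Fin n) ℝ × EuclideanSpace ℝ (Fin n) =>
          Matrix.toEuclideanLin (star q.1) q.2)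
        ∘ (fun p => ((p.1 : Matrix (Fin n) (Fin n) ℝ), (p.2 : EuclideanSpace ℝ (Fin n)))) := by
    funext p
    simp only [Function.comp_apply, act, coe_inv_orth]
  rw [h]
  exact continuous_matrix_action.measurable.comp
    ((measurable_subtype_coe.comp measurable_fst).prodMk
      (measurable_subtype_coe.comp measurable_snd))

lemma measurable_act_inv (z : EuclideanSpace ℝ (Fin n)) :
    Measurable fun T : OrthGroup n => act T⁻¹ z := by
  have h : (fun T : OrthGroup n => act T⁻¹ z)
      = (fun q : Matrix (Fin n) (Fin n) ℝ × EuclideanSpace ℝ (Fin n) =>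
          Matrix.toEuclideanLin (star q.1) q.2)
        ∘ (fun T : OrthGroup n => ((T : Matrix (Fin n) (Fin n) ℝ), z)) := by
    funext T
    simp only [Function.comp_apply, act, coe_inv_orth]
  rw [h]
  exact continuous_matrix_action.measurable.comp
    (measurable_subtype_coe.prodMk measurable_const)

instance orthMeasurableMul (n : ℕ) : MeasurableMul (OrthGroup n) := by
  constructor
  · intro c
    apply Measurable.subtype_mk
    have : Continuous fun M : Matrix (Fin n) (Fin n) ℝ =>
        (c : Matrix (Fin n) (Fin n) ℝ) * M := continuous_const.matrix_mul continuous_id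
    exact this.measurable.comp measurable_subtype_coe
  · intro c
    apply Measurable.subtype_mk
    have : Continuous fun M : Matrix (Fin n) (Fin n) ℝ =>
        M * (c : Matrix (Fin n) (Fin n) ℝ) := continuous_id.matrix_mul continuous_const
    exact this.measurable.comp measurable_subtype_coe

end MoreAux

section SphereAux

variable {n : ℕ}

lemma toSphere_preimage_iso (f : EuclideanSpace ℝ (Fin n) ≃ₗᵢ[ℝ] EuclideanSpace ℝ (Fin n))
    {A : Set (EuclideanSpace ℝ (Fin n))} (hA : MeasurableSet A) :
    (volume : Measure (EuclideanSpace ℝ (Fin n))).toSphere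
        (((↑) : sphere (0 : EuclideanSpace ℝ (Fin n)) 1 → _) ⁻¹' (f ⁻¹' A))
      = (volume : Measure (EuclideanSpace ℝ (Fin n))).toSphere
        (((↑) : sphere (0 : EuclideanSpace ℝ (Fin n)) 1 → _) ⁻¹' A) := by
  have hfA : MeasurableSet (f ⁻¹' A) := f.continuous.measurable hA
  have hs1 : MeasurableSet (((↑) : sphere (0 : EuclideanSpace ℝ (Fin n)) 1 → _) ⁻¹' (f ⁻¹' A)) :=
    measurable_subtype_coe hfA
  have hs2 : MeasurableSet (((↑) : sphere (0 : EuclideanSpace ℝ (Fin n)) 1 → _) ⁻¹' A) :=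
    measurable_subtype_coe hA
  rw [Measure.toSphere_apply' _ hs1, Measure.toSphere_apply' _ hs2]
  congr 1
  have hfs : f ⁻¹' (sphere (0 : EuclideanSpace ℝ (Fin n)) 1) = sphere 0 1 := by
    ext v
    simp [Set.mem_preimage, mem_sphere_zero_iff_norm, f.norm_map]
  have himg : Subtype.val '' (((↑) : sphere (0 : EuclideanSpace ℝ (Fin n)) 1 → _) ⁻¹' (f ⁻¹' A))
      = f ⁻¹' (Subtype.val '' (((↑) : sphere (0 : EuclideanSpace ℝ (Fin n)) 1 → _) ⁻¹' A)) := by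
    rw [Subtype.image_preimage_coe, Subtype.image_preimage_coe, Set.preimage_inter, hfs]
  rw [himg]
  set B := Subtype.val '' (((↑) : sphere (0 : EuclideanSpace ℝ (Fin n)) 1 → _) ⁻¹' A) with hB
  have hsmul : Set.Ioo (0:ℝ) 1 • (f ⁻¹' B) = f ⁻¹' (Set.Ioo (0:ℝ) 1 • B) := by
    ext v
    constructor
    · rintro ⟨r, hr, y, hy, rfl⟩
      exact ⟨r, hr, f y, hy, (_root_.map_smul f r y).symm⟩
    · rintro ⟨r, hr, b, hb, hrb⟩
      refine ⟨r, hr, f.symm b, by simpa using hb, ?_⟩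
      apply f.injective
      rw [_root_.map_smul]
      simpa using hrb
  rw [hsmul]
  have e : EuclideanSpace ℝ (Fin n) ≃ᵐ EuclideanSpace ℝ (Fin n) :=
    f.toHomeomorph.toMeasurableEquiv
  calc volume (f ⁻¹' (Set.Ioo (0:ℝ) 1 • B))
      = (volume.map f.toHomeomorph.toMeasurableEquiv) (Set.Ioo (0:ℝ) 1 • B) := by
        rw [MeasurableEquiv.map_apply]
        rfl
    _ = volume (Set.Ioo (0:ℝ) 1 • B) := by
        have : (volume.map f.toHomeomorph.toMeasurableEquiv)
            = (volume : Measure (EuclideanSpace ℝ (Fin n))).map f := rfl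
        rw [this, f.measurePreserving.map_eq]

lemma haar_act_inv_mul (μ : Measure (OrthGroup n)) [μ.IsHaarMeasure] [IsProbabilityMeasure μ]
    {A : Set (EuclideanSpace ℝ (Fin n))} (hAm : MeasurableSet A)
    {z : EuclideanSpace ℝ (Fin n)} (hz : ‖z‖ = 1) :
    μ {T : OrthGroup n | act T⁻¹ z ∈ A}
        * (volume : Measure (EuclideanSpace ℝ (Fin n))).toSphere Set.univ
      = (volume : Measure (EuclideanSpace ℝ (Fin n))).toSphere
          (((↑) : sphere (0 : EuclideanSpace ℝ (Fin n)) 1 → _) ⁻¹' A) := by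
  have hBm : ∀ w : EuclideanSpace ℝ (Fin n), MeasurableSet {T : OrthGroup n | act T⁻¹ w ∈ A} :=
    fun w => measurable_act_inv w hAm
  have hconst : ∀ w : EuclideanSpace ℝ (Fin n), ‖w‖ = 1 →
      μ {T : OrthGroup n | act T⁻¹ w ∈ A} = μ {T : OrthGroup n | act T⁻¹ z ∈ A} := by
    intro w hw
    obtain ⟨S, hS⟩ := exists_act_eq hz hw
    have hpre : (fun h : OrthGroup n => S * h) ⁻¹' {T : OrthGroup n | act T⁻¹ w ∈ A}
        = {T : OrthGroup n | act T⁻¹ z ∈ A} := by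
      ext T
      simp only [Set.mem_preimage, Set.mem_setOf_eq, mul_inv_rev, act_mul]
      rw [← hS, act_inv_act]
    rw [← measure_preimage_mul μ S {T : OrthGroup n | act T⁻¹ w ∈ A}, hpre]
  set P : Set (OrthGroup n × sphere (0 : EuclideanSpace ℝ (Fin n)) 1) :=
    {p | act p.1⁻¹ (p.2 : EuclideanSpace ℝ (Fin n)) ∈ A} with hPdef
  have hP : MeasurableSet P := measurable_act_inv_pair hAm
  set σ : Measure (sphere (0 : EuclideanSpace ℝ (Fin n)) 1) :=
    (volume : Measure (EuclideanSpace ℝ (Fin n))).toSphere with hσdef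
  have hswap : ∫⁻ T, ∫⁻ y, P.indicator 1 (T, y) ∂σ ∂μ
      = ∫⁻ y, ∫⁻ T, P.indicator 1 (T, y) ∂μ ∂σ := by
    apply lintegral_lintegral_swap
    exact (measurable_one.indicator hP).aemeasurable
  have hleft : ∫⁻ T, ∫⁻ y, P.indicator 1 (T, y) ∂σ ∂μ
      = σ (((↑) : sphere (0 : EuclideanSpace ℝ (Fin n)) 1 → _) ⁻¹' A) := by
    have inner1 : ∀ T : OrthGroup n, ∫⁻ y, P.indicator 1 (T, y) ∂σ
        = σ (((↑) : sphere (0 : EuclideanSpace ℝ (Fin n)) 1 → _) ⁻¹' A) := by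
      intro T
      have heq : (fun y : sphere (0 : EuclideanSpace ℝ (Fin n)) 1 => P.indicator 1 (T, y))
          = Set.indicator (((↑) : sphere (0 : EuclideanSpace ℝ (Fin n)) 1 → _) ⁻¹'
              ((actIso T⁻¹) ⁻¹' A)) (1 : sphere (0 : EuclideanSpace ℝ (Fin n)) 1 → ℝ≥0∞) := by
        funext y
        simp only [Set.indicator_apply]
        rfl
      rw [heq, lintegral_indicator_one (measurable_subtype_coe
        ((actIso T⁻¹).continuous.measurable hAm))]
      exact toSphere_preimage_iso (actIso T⁻¹) hAm
    rw [lintegral_congr inner1, lintegral_const, measure_univ, mul_one]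
  have hright : ∫⁻ y, ∫⁻ T, P.indicator 1 (T, y) ∂μ ∂σ
      = μ {T : OrthGroup n | act T⁻¹ z ∈ A} * σ Set.univ := by
    have inner2 : ∀ y : sphere (0 : EuclideanSpace ℝ (Fin n)) 1,
        ∫⁻ T, P.indicator 1 (T, y) ∂μ = μ {T : OrthGroup n | act T⁻¹ z ∈ A} := by
      intro y
      have heq : (fun T : OrthGroup n => P.indicator 1 (T, y))
          = Set.indicator {T : OrthGroup n | act T⁻¹ (y : EuclideanSpace ℝ (Fin n)) ∈ A}
            (1 : OrthGroup n → ℝ≥0∞) := by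
        funext T
        simp only [Set.indicator_apply]
        rfl
      rw [heq, lintegral_indicator_one (hBm _)]
      exact hconst _ (norm_eq_of_mem_sphere y)
    rw [lintegral_congr inner2, lintegral_const]
  rw [← hright, ← hswap, hleft]

end SphereAux
end

/-- For every vertex `i`, the atomic densities of independent sets containing `i`
sum to the density `δ(A)`. -/
theorem atomicDensity_vertex_sum (n : ℕ) (hn : 2 ≤ n) (μ : Measure (OrthGroup n))
    [μ.IsHaarMeasure] [IsProbabilityMeasure μ]
    (A : Set (EuclideanSpace ℝ (Fin n))) (hA : A ⊆ unitSphere n) (hAm : MeasurableSet A)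
    (hsymm : A = -A) (horth : AvoidsOrthogonality A)
    (N : ℕ) (x : Fin N → EuclideanSpace ℝ (Fin n))
    (hx_sphere : ∀ i, x i ∈ unitSphere n)
    (hx_distinct : ∀ i j : Fin N, i ≠ j → x i ≠ x j ∧ x i ≠ -x j) :
    ∀ i : Fin N,
      (∑ I ∈ Finset.univ.filter (fun I : Finset (Fin N) => IsIndependent x I ∧ i ∈ I),
        atomicDensity μ A x I) = density n A := by
  intro i
  classical
  have hz : ‖x i‖ = 1 := hx_sphere i
  set Ev : Finset (Fin N) → Set (OrthGroup n) := fun I =>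
    {T : OrthGroup n | {j : Fin N | x j ∈ act T '' A} = (I : Set (Fin N))} with hEvdef
  have hB : ∀ j : Fin N, MeasurableSet {T : OrthGroup n | act T⁻¹ (x j) ∈ A} :=
    fun j => measurable_act_inv (x j) hAm
  have hEv : ∀ I : Finset (Fin N), MeasurableSet (Ev I) := by
    intro I
    have hfor : Ev I = ⋂ j : Fin N, {T : OrthGroup n | x j ∈ act T '' A ↔ j ∈ I} := by
      ext T
      simp only [hEvdef, Set.mem_setOf_eq, Set.mem_iInter, Set.ext_iff]
      constructor
      · intro h j
        simpa using h j
      · intro h j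
        simpa using h j
    rw [hfor]
    apply MeasurableSet.iInter
    intro j
    by_cases hj : j ∈ I
    · have : {T : OrthGroup n | x j ∈ act T '' A ↔ j ∈ I}
          = {T : OrthGroup n | act T⁻¹ (x j) ∈ A} := by
        ext T
        simp only [Set.mem_setOf_eq, hj, iff_true]
        exact mem_act_image
      rw [this]; exact hB j
    · have : {T : OrthGroup n | x j ∈ act T '' A ↔ j ∈ I}
          = {T : OrthGroup n | act T⁻¹ (x j) ∈ A}ᶜ := by
        ext T
        simp only [Set.mem_setOf_eq, hj, iff_false, Set.mem_compl_iff]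
        exact not_congr mem_act_image
      rw [this]; exact (hB j).compl
  have hdisj : ((Finset.univ.filter (fun I : Finset (Fin N) => i ∈ I)) : Set (Finset (Fin N))).PairwiseDisjoint Ev := by
    intro I _ J _ hIJ
    apply Set.disjoint_left.mpr
    intro T hTI hTJ
    apply hIJ
    apply Finset.coe_injective
    rw [← hTI, ← hTJ]
  have hUnion : (⋃ I ∈ Finset.univ.filter (fun I : Finset (Fin N) => i ∈ I), Ev I)
      = {T : OrthGroup n | act T⁻¹ (x i) ∈ A} := by
    ext T
    simp only [Set.mem_iUnion, Finset.mem_filter, Finset.mem_univ, true_and, Set.mem_setOf_eq]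
    constructor
    · rintro ⟨I, hiI, hTI⟩
      have hmem : x i ∈ act T '' A := by
        have := (Set.ext_iff.mp hTI i).mpr (by simpa using hiI)
        simpa using this
      exact mem_act_image.mp hmem
    · intro h
      refine ⟨{j : Fin N | x j ∈ act T '' A}.toFinset, ?_, ?_⟩
      · rw [Set.mem_toFinset]
        exact mem_act_image.mpr h
      · exact (Set.coe_toFinset _).symm
  have hmeasure : μ {T : OrthGroup n | act T⁻¹ (x i) ∈ A}
      = ∑ I ∈ Finset.univ.filter (fun I : Finset (Fin N) => i ∈ I), μ (Ev I) := by
    rw [← hUnion]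
    exact measure_biUnion_finset hdisj (fun I _ => hEv I)
  have hindep : ∀ I : Finset (Fin N), ¬ IsIndependent x I → Ev I = ∅ := by
    intro I hI
    ext T
    simp only [hEvdef, Set.mem_setOf_eq, Set.mem_empty_iff_false, iff_false]
    intro hT
    apply hI
    intro j hj k hk hjk
    have hjA : x j ∈ act T '' A := by
      have := (Set.ext_iff.mp hT j).mpr (by simpa using hj)
      simpa using this
    have hkA : x k ∈ act T '' A := by
      have := (Set.ext_iff.mp hT k).mpr (by simpa using hk)
      simpa using this
    obtain ⟨a, ha, haj⟩ := hjA
    obtain ⟨b, hb, hbk⟩ := hkA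
    rw [← haj, ← hbk, inner_act]
    exact horth a ha b hb
  -- reduce the filtered sum
  have hsub : Finset.univ.filter (fun I : Finset (Fin N) => IsIndependent x I ∧ i ∈ I)
      ⊆ Finset.univ.filter (fun I : Finset (Fin N) => i ∈ I) := by
    intro I hI
    simp only [Finset.mem_filter, Finset.mem_univ, true_and] at hI ⊢
    exact hI.2
  have hsum1 : (∑ I ∈ Finset.univ.filter (fun I : Finset (Fin N) => IsIndependent x I ∧ i ∈ I),
        atomicDensity μ A x I)
      = ∑ I ∈ Finset.univ.filter (fun I : Finset (Fin N) => i ∈ I), atomicDensity μ A x I := by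
    apply Finset.sum_subset hsub
    intro I hI1 hI2
    simp only [Finset.mem_filter, Finset.mem_univ, true_and] at hI1 hI2
    have hnind : ¬ IsIndependent x I := fun h => hI2 ⟨h, hI1⟩
    have : Ev I = ∅ := hindep I hnind
    simp only [atomicDensity]
    rw [show {T : OrthGroup n | {i : Fin N | x i ∈ act T '' A} = (I : Set (Fin N))} = Ev I from rfl,
      this]
    simp
  have hsum2 : (∑ I ∈ Finset.univ.filter (fun I : Finset (Fin N) => i ∈ I), atomicDensity μ A x I)
      = (μ {T : OrthGroup n | act T⁻¹ (x i) ∈ A}).toReal := by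
    rw [hmeasure, ENNReal.toReal_sum (fun I _ => measure_ne_top μ _)]
    rfl
  rw [hsum1, hsum2]
  -- evaluate via the haar lemma
  have hkey := haar_act_inv_mul μ hAm hz
  have hμuniv0 : (volume : Measure (EuclideanSpace ℝ (Fin n))).toSphere (Set.univ) ≠ 0 := by
    rw [Measure.toSphere_apply_univ]
    apply mul_ne_zero
    · simp only [ne_eq, Nat.cast_eq_zero]
      rw [finrank_euclideanSpace_fin]
      omega
    · exact (measure_ball_pos volume (0 : EuclideanSpace ℝ (Fin n)) one_pos).ne'
  have hμunivtop : (volume : Measure (EuclideanSpace ℝ (Fin n))).toSphere (Set.univ) ≠ ⊤ :=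
    measure_ne_top _ _
  rw [density, ← hkey, ENNReal.toReal_mul, mul_div_assoc,
    div_self (ENNReal.toReal_ne_zero.mpr ⟨hμuniv0, hμunivtop⟩), mul_one]
end
end

section
/- Let X = {x₁, −x₁, …, x_N, −x_N} ⊆ S² be a finite symmetric set, let w₀ and w_{i,j} (1 ≤ i ≤ j ≤ N) be real numbers, and for i < j let θ_{i,j} ∈ (0, π) be the angle with cos θ_{i,j} = ⟨x_i, x_j⟩. Suppose k₀ ≥ 0 is an integer such that (2|w₀|/π)·∫₀^{π/2} (1 − cos²φ)^{k₀/2} dφ + (2/π)·Σ_{1≤i<j≤N} |w_{i,j}|·∫₀^{π/2} (1 − sin²θ_{i,j}·cos²φ)^{k₀/2} dφ ≤ Σ_{i=1}^N w_{i,i} − 1. Then for every even integer k ≥ k₀, one has w₀·P_k(0) + Σ_{1≤i≤j≤N} w_{i,j}·P_k(⟨x_i, x_j⟩) ≥ 1 (where P_k(⟨x_i, x_i⟩) = P_k(1) = 1). -/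
open MeasureTheory Metric Finset
open scoped RealInnerProductSpace ENNReal Classical

noncomputable section

section AuxLemmas
open intervalIntegral Complex
lemma legendre_one : ∀ k, legendre k 1 = 1
  | 0 => rfl
  | 1 => rfl
  | (k+2) => by
    have h1 : legendre (k+1) 1 = 1 := legendre_one (k+1)
    have h2 : legendre k 1 = 1 := legendre_one k
    have hk : (k:ℝ) + 2 ≠ 0 := by positivity
    rw [legendre, h1, h2]; field_simp; ring

def fC (θ φ : ℝ) : ℂ := (Real.cos θ : ℂ) + Complex.I * (Real.sin θ : ℂ) * (Real.cos φ : ℂ)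

lemma fC_cont (θ : ℝ) : Continuous (fC θ) := by unfold fC; continuity

lemma key_deriv (θ : ℝ) (k : ℕ) (φ : ℝ) :
    HasDerivAt (fun φ => Complex.I * (Real.sin θ : ℂ) * (Real.sin φ : ℂ) * fC θ φ ^ (k+1))
      (((k:ℂ)+2) * fC θ φ ^ (k+2) - (2*(k:ℂ)+3) * (Real.cos θ : ℂ) * fC θ φ ^ (k+1)
        + ((k:ℂ)+1) * fC θ φ ^ k) φ := by
  have hsin : HasDerivAt (fun φ : ℝ => ((Real.sin φ : ℂ))) ((Real.cos φ : ℂ)) φ :=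
    (Real.hasDerivAt_sin φ).ofReal_comp
  have hcos : HasDerivAt (fun φ : ℝ => ((Real.cos φ : ℂ))) (-(Real.sin φ : ℂ)) φ := by
    exact_mod_cast (Real.hasDerivAt_cos φ).ofReal_comp
  have hf : HasDerivAt (fC θ) (Complex.I * (Real.sin θ : ℂ) * (-(Real.sin φ : ℂ))) φ :=
    (hcos.const_mul (Complex.I * (Real.sin θ : ℂ))).const_add ((Real.cos θ : ℂ))
  have hfp : ∀ m : ℕ, HasDerivAt (fun φ => fC θ φ ^ (m+1))
      (((m:ℂ)+1) * fC θ φ ^ m * (Complex.I * (Real.sin θ : ℂ) * (-(Real.sin φ : ℂ)))) φ := by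
    intro m
    induction m with
    | zero => simpa using hf
    | succ m ih =>
      have h2 : HasDerivAt (fun φ => fC θ φ ^ (m+1) * fC θ φ) _ φ := ih.mul hf
      have harr2 : (fun φ : ℝ => fC θ φ ^ (m+2)) = fun φ : ℝ => fC θ φ ^ (m+1) * fC θ φ := by
        funext ψ; ring
      rw [harr2]
      convert h2 using 1
      push_cast; ring
  have h : HasDerivAt (fun φ : ℝ => (Complex.I * (Real.sin θ : ℂ) * (Real.sin φ : ℂ)) * fC θ φ ^ (k+1)) _ φ :=
    (hsin.const_mul (Complex.I * (Real.sin θ : ℂ))).mul (hfp k)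
  have harr : (fun φ : ℝ => Complex.I * (Real.sin θ : ℂ) * (Real.sin φ : ℂ) * fC θ φ ^ (k+1))
      = fun φ : ℝ => (Complex.I * (Real.sin θ : ℂ) * (Real.sin φ : ℂ)) * fC θ φ ^ (k+1) := rfl
  rw [harr]
  convert h using 1
  set C := (Real.cos θ : ℂ); set S := (Real.sin θ : ℂ)
  set u := (Real.cos φ : ℂ); set v := (Real.sin φ : ℂ)
  set F := fC θ φ with hF0
  have hF : F = C + Complex.I * S * u := rfl
  have hI : Complex.I^2 = -1 := Complex.I_sq
  have e1 : Complex.I*S*u = F - C := by rw [hF]; ring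
  have hv : v^2 = 1 - u^2 := by
    have h4 : (Real.sin φ:ℝ)^2 + (Real.cos φ:ℝ)^2 = 1 := Real.sin_sq_add_cos_sq φ
    have h5 : v^2 + u^2 = 1 := by
      show ((Real.sin φ:ℝ):ℂ)^2 + ((Real.cos φ:ℝ):ℂ)^2 = 1
      exact_mod_cast congrArg (Complex.ofReal) h4
    linear_combination h5
  have hSC : S^2 = 1 - C^2 := by
    have h4 : (Real.sin θ:ℝ)^2 + (Real.cos θ:ℝ)^2 = 1 := Real.sin_sq_add_cos_sq θ
    have h5 : S^2 + C^2 = 1 := by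
      show ((Real.sin θ:ℝ):ℂ)^2 + ((Real.cos θ:ℝ):ℂ)^2 = 1
      exact_mod_cast congrArg (Complex.ofReal) h4
    linear_combination h5
  have e3 : S^2*v^2 = S^2 + (F - C)^2 := by
    have h5 : (F-C)^2 = -(S^2*u^2) := by
      rw [← e1, show (Complex.I*S*u)^2 = Complex.I^2*(S^2*u^2) from by ring, hI]; ring
    rw [h5, hv]; ring
  linear_combination (-(F^(k+1))) * e1 - (((k:ℂ)+1)*F^k) * e3 - (((k:ℂ)+1)*F^k) * hSC + (((k:ℂ)+1)*F^k*S^2*v^2) * hI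

lemma fC_int (θ : ℝ) (m : ℕ) :
    IntervalIntegrable (fun φ => fC θ φ ^ m) MeasureTheory.volume 0 Real.pi :=
  ((fC_cont θ).pow m).intervalIntegrable 0 Real.pi

lemma key_recurrence (θ : ℝ) (k : ℕ) :
    ((k:ℂ)+2) * ∫ φ in (0:ℝ)..Real.pi, fC θ φ ^ (k+2) =
    (2*(k:ℂ)+3) * (Real.cos θ : ℂ) * (∫ φ in (0:ℝ)..Real.pi, fC θ φ ^ (k+1))
      - ((k:ℂ)+1) * ∫ φ in (0:ℝ)..Real.pi, fC θ φ ^ k := by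
  have hcontd : Continuous (fun φ => ((k:ℂ)+2) * fC θ φ ^ (k+2)
      - (2*(k:ℂ)+3) * (Real.cos θ : ℂ) * fC θ φ ^ (k+1) + ((k:ℂ)+1) * fC θ φ ^ k) := by
    have h := fC_cont θ
    continuity
  have h0 := intervalIntegral.integral_eq_sub_of_hasDerivAt
    (f := fun φ => Complex.I * (Real.sin θ : ℂ) * (Real.sin φ : ℂ) * fC θ φ ^ (k+1))
    (fun φ _ => key_deriv θ k φ)
    (hcontd.intervalIntegrable 0 Real.pi)
  simp only [Real.sin_pi, Real.sin_zero, Complex.ofReal_zero, mul_zero, zero_mul, sub_zero] at h0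
  have h1 : (∫ φ in (0:ℝ)..Real.pi, (((k:ℂ)+2) * fC θ φ ^ (k+2)
      - (2*(k:ℂ)+3) * (Real.cos θ : ℂ) * fC θ φ ^ (k+1) + ((k:ℂ)+1) * fC θ φ ^ k))
      = ((k:ℂ)+2) * (∫ φ in (0:ℝ)..Real.pi, fC θ φ ^ (k+2))
      - (2*(k:ℂ)+3) * (Real.cos θ : ℂ) * (∫ φ in (0:ℝ)..Real.pi, fC θ φ ^ (k+1))
      + ((k:ℂ)+1) * ∫ φ in (0:ℝ)..Real.pi, fC θ φ ^ k := by
    rw [intervalIntegral.integral_add (((fC_int θ (k+2)).const_mul _).sub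
        ((fC_int θ (k+1)).const_mul _)) ((fC_int θ k).const_mul _),
      intervalIntegral.integral_sub ((fC_int θ (k+2)).const_mul _) ((fC_int θ (k+1)).const_mul _),
      intervalIntegral.integral_const_mul, intervalIntegral.integral_const_mul,
      intervalIntegral.integral_const_mul]
  rw [h1] at h0
  linear_combination h0

lemma laplace (θ : ℝ) : ∀ k : ℕ,
    ((legendre k (Real.cos θ) : ℝ) : ℂ)
      = (Real.pi : ℂ)⁻¹ * ∫ φ in (0:ℝ)..Real.pi, fC θ φ ^ k
  | 0 => by
    simp [legendre, Real.pi_ne_zero]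
  | 1 => by
    have : (∫ φ in (0:ℝ)..Real.pi, fC θ φ ^ 1)
        = (Real.pi : ℂ) * (Real.cos θ : ℂ) := by
      simp only [pow_one]
      unfold fC
      rw [intervalIntegral.integral_add (by apply Continuous.intervalIntegrable; continuity)
        (by apply Continuous.intervalIntegrable; continuity),
        intervalIntegral.integral_const_mul]
      have hc : (∫ φ in (0:ℝ)..Real.pi, ((Real.cos φ : ℝ):ℂ)) = 0 := by
        rw [intervalIntegral.integral_ofReal]
        simp [integral_cos]
      rw [hc]
      simp [mul_comm]
    rw [legendre, this]
    field_simp [Complex.ofReal_ne_zero.mpr Real.pi_ne_zero]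
  | (k+2) => by
    have ih1 := laplace θ (k+1)
    have ih0 := laplace θ k
    have hrec := key_recurrence θ k
    have hk : ((k:ℂ)+2) ≠ 0 := by
      have : (0:ℝ) < (k:ℝ) + 2 := by positivity
      simp only [ne_eq]
      intro h
      have := congrArg Complex.re h
      push_cast at this
      norm_num at this
      linarith
    have hpi : (Real.pi : ℂ) ≠ 0 := Complex.ofReal_ne_zero.mpr Real.pi_ne_zero
    rw [show legendre (k+2) (Real.cos θ)
      = ((2*(k:ℝ)+3) * Real.cos θ * legendre (k+1) (Real.cos θ)
        - ((k:ℝ)+1) * legendre k (Real.cos θ)) / ((k:ℝ)+2) from rfl]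
    push_cast at hrec ⊢
    rw [ih1, ih0]
    field_simp
    linear_combination (-1:ℂ) * hrec

lemma abs_fC (θ φ : ℝ) :
    ‖fC θ φ‖ = Real.sqrt (1 - Real.sin θ^2 * Real.sin φ^2) := by
  have h : fC θ φ = (Real.cos θ : ℂ) + ((Real.sin θ * Real.cos φ : ℝ) : ℂ) * Complex.I := by
    unfold fC; push_cast; ring
  rw [h, Complex.norm_add_mul_I]
  congr 1
  have h1 := Real.sin_sq_add_cos_sq θ
  have h2 := Real.sin_sq_add_cos_sq φ
  nlinarith [sq_nonneg (Real.sin θ), sq_nonneg (Real.cos φ)]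

lemma symm_integral (a : ℝ) (k : ℕ) :
    (∫ φ in (0:ℝ)..Real.pi, Real.sqrt (1 - a * Real.sin φ^2) ^ k)
      = 2 * ∫ φ in (0:ℝ)..(Real.pi/2), Real.sqrt (1 - a * Real.cos φ^2) ^ k := by
  have hcont : Continuous (fun φ => Real.sqrt (1 - a * Real.sin φ^2) ^ k) := by continuity
  have hsplit : (∫ φ in (0:ℝ)..Real.pi, Real.sqrt (1 - a * Real.sin φ^2) ^ k)
      = (∫ φ in (0:ℝ)..(Real.pi/2), Real.sqrt (1 - a * Real.sin φ^2) ^ k)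
      + ∫ φ in (Real.pi/2)..Real.pi, Real.sqrt (1 - a * Real.sin φ^2) ^ k :=
    (intervalIntegral.integral_add_adjacent_intervals
      (hcont.intervalIntegrable _ _) (hcont.intervalIntegrable _ _)).symm
  have h1 : (∫ φ in (Real.pi/2)..Real.pi, Real.sqrt (1 - a * Real.sin φ^2) ^ k)
      = ∫ φ in (0:ℝ)..(Real.pi/2), Real.sqrt (1 - a * Real.sin φ^2) ^ k := by
    have := intervalIntegral.integral_comp_sub_left (a := (0:ℝ)) (b := Real.pi/2)
      (fun φ => Real.sqrt (1 - a * Real.sin φ^2) ^ k) Real.pi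
    rw [show Real.pi - Real.pi/2 = Real.pi/2 by ring, sub_zero] at this
    rw [← this]
    apply intervalIntegral.integral_congr
    intro φ _
    simp [Real.sin_pi_sub]
  have h2 : (∫ φ in (0:ℝ)..(Real.pi/2), Real.sqrt (1 - a * Real.sin φ^2) ^ k)
      = ∫ φ in (0:ℝ)..(Real.pi/2), Real.sqrt (1 - a * Real.cos φ^2) ^ k := by
    have := intervalIntegral.integral_comp_sub_left (a := (0:ℝ)) (b := Real.pi/2)
      (fun φ => Real.sqrt (1 - a * Real.sin φ^2) ^ k) (Real.pi/2)
    rw [show Real.pi/2 - Real.pi/2 = 0 by ring, sub_zero] at this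
    rw [← this]
    apply intervalIntegral.integral_congr
    intro φ _
    simp [Real.sin_pi_div_two_sub]
  rw [hsplit, h1, h2]; ring

lemma abs_leg_le (θ : ℝ) (k : ℕ) :
    |legendre k (Real.cos θ)|
      ≤ (2 / Real.pi) * ∫ φ in (0:ℝ)..(Real.pi/2),
          Real.sqrt (1 - Real.sin θ^2 * Real.cos φ^2) ^ k := by
  have hpi := Real.pi_pos
  have h0 : |legendre k (Real.cos θ)|
      = ‖((legendre k (Real.cos θ) : ℝ) : ℂ)‖ := (Complex.norm_real _).symm
  rw [h0, laplace θ k, norm_mul]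
  have habs : ‖((Real.pi : ℂ)⁻¹)‖ = (Real.pi)⁻¹ := by
    rw [norm_inv, Complex.norm_real, Real.norm_eq_abs, abs_of_pos hpi]
  rw [habs]
  have hle : ‖(∫ φ in (0:ℝ)..Real.pi, fC θ φ ^ k)‖
      ≤ ∫ φ in (0:ℝ)..Real.pi, Real.sqrt (1 - Real.sin θ^2 * Real.sin φ^2) ^ k := by
    calc ‖(∫ φ in (0:ℝ)..Real.pi, fC θ φ ^ k)‖
        ≤ ∫ φ in (0:ℝ)..Real.pi, ‖fC θ φ ^ k‖ := by
          exact intervalIntegral.norm_integral_le_integral_norm hpi.le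
      _ = ∫ φ in (0:ℝ)..Real.pi, Real.sqrt (1 - Real.sin θ^2 * Real.sin φ^2) ^ k := by
          apply intervalIntegral.integral_congr
          intro φ _
          simp only [norm_pow, abs_fC]
  calc (Real.pi)⁻¹ * ‖(∫ φ in (0:ℝ)..Real.pi, fC θ φ ^ k)‖
      ≤ (Real.pi)⁻¹ * ∫ φ in (0:ℝ)..Real.pi, Real.sqrt (1 - Real.sin θ^2 * Real.sin φ^2) ^ k :=
        mul_le_mul_of_nonneg_left hle (by positivity)
    _ = (2 / Real.pi) * ∫ φ in (0:ℝ)..(Real.pi/2),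
          Real.sqrt (1 - Real.sin θ^2 * Real.cos φ^2) ^ k := by
        rw [symm_integral]; ring

lemma base_mem (θ φ : ℝ) : 0 ≤ 1 - Real.sin θ^2 * Real.cos φ^2 := by
  nlinarith [Real.sin_sq_le_one θ, Real.cos_sq_le_one φ, sq_nonneg (Real.sin θ),
    sq_nonneg (Real.cos φ), sq_nonneg (Real.sin θ * Real.cos φ)]

lemma abs_leg_le' (θ : ℝ) {k₀ k : ℕ} (hk : k₀ ≤ k) :
    |legendre k (Real.cos θ)|
      ≤ (2 / Real.pi) * ∫ φ in (0:ℝ)..(Real.pi/2),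
          (1 - Real.sin θ^2 * Real.cos φ^2) ^ ((k₀ : ℝ)/2) := by
  have hpi := Real.pi_pos
  refine (abs_leg_le θ k).trans ?_
  have hcont : ∀ m : ℕ, Continuous (fun φ => Real.sqrt (1 - Real.sin θ^2 * Real.cos φ^2) ^ m) :=
    by intro m; continuity
  have hmono : (∫ φ in (0:ℝ)..(Real.pi/2), Real.sqrt (1 - Real.sin θ^2 * Real.cos φ^2) ^ k)
      ≤ ∫ φ in (0:ℝ)..(Real.pi/2), Real.sqrt (1 - Real.sin θ^2 * Real.cos φ^2) ^ k₀ := by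
    apply intervalIntegral.integral_mono_on (by positivity)
      ((hcont k).intervalIntegrable _ _) ((hcont k₀).intervalIntegrable _ _)
    intro φ _
    apply pow_le_pow_of_le_one (Real.sqrt_nonneg _) _ hk
    rw [Real.sqrt_le_one]
    nlinarith [sq_nonneg (Real.sin θ * Real.cos φ)]
  have hconv : (∫ φ in (0:ℝ)..(Real.pi/2), Real.sqrt (1 - Real.sin θ^2 * Real.cos φ^2) ^ k₀)
      = ∫ φ in (0:ℝ)..(Real.pi/2), (1 - Real.sin θ^2 * Real.cos φ^2) ^ ((k₀ : ℝ)/2) := by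
    apply intervalIntegral.integral_congr
    intro φ _
    have hb := base_mem θ φ
    show Real.sqrt (1 - Real.sin θ^2 * Real.cos φ^2) ^ k₀
        = (1 - Real.sin θ^2 * Real.cos φ^2) ^ ((k₀ : ℝ)/2)
    rw [← Real.rpow_natCast (Real.sqrt _) k₀, Real.sqrt_eq_rpow, ← Real.rpow_mul hb]
    norm_num
    congr 1
    ring
  rw [← hconv]
  exact mul_le_mul_of_nonneg_left hmono (by positivity)

end AuxLemmas

/-- The threshold criterion: if `k₀` satisfies the integral inequality, then the dual
constraint `w₀·P_k(0) + Σ_{i≤j} w_{i,j}·P_k(⟪x_i, x_j⟫) ≥ 1` holds for every even `k ≥ k₀`. -/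
theorem threshold_criterion (N : ℕ) (x : Fin N → EuclideanSpace ℝ (Fin 3))
    (hx_sphere : ∀ i, x i ∈ unitSphere 3)
    (hx_distinct : ∀ i j : Fin N, i ≠ j → x i ≠ x j ∧ x i ≠ -x j)
    (w₀ : ℝ) (w : Fin N → Fin N → ℝ) (θ : Fin N → Fin N → ℝ)
    (hθ : ∀ i j : Fin N, i < j →
      θ i j ∈ Set.Ioo (0 : ℝ) Real.pi ∧ Real.cos (θ i j) = ⟪x i, x j⟫)
    (k₀ : ℕ)
    (hk₀ : (2 * |w₀| / Real.pi) *
        (∫ φ in (0 : ℝ)..(Real.pi / 2), (1 - Real.cos φ ^ 2) ^ ((k₀ : ℝ) / 2))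
      + (2 / Real.pi) * ∑ i : Fin N, ∑ j ∈ Finset.univ.filter (fun j => i < j),
          |w i j| * ∫ φ in (0 : ℝ)..(Real.pi / 2),
            (1 - Real.sin (θ i j) ^ 2 * Real.cos φ ^ 2) ^ ((k₀ : ℝ) / 2)
      ≤ (∑ i : Fin N, w i i) - 1) :
    ∀ k : ℕ, k₀ ≤ k → Even k →
      w₀ * legendre k 0 + ∑ i : Fin N, ∑ j ∈ Finset.univ.filter (fun j => i ≤ j),
        w i j * legendre k ⟪x i, x j⟫ ≥ 1 := by
  intro k hk _
  have hpi := Real.pi_pos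
  -- bound for legendre k 0
  have key0 : |legendre k (0:ℝ)| ≤ (2/Real.pi) *
      ∫ φ in (0:ℝ)..(Real.pi/2), (1 - Real.cos φ^2)^((k₀:ℝ)/2) := by
    have h := abs_leg_le' (Real.pi/2) hk
    rw [Real.cos_pi_div_two] at h
    refine h.trans_eq ?_
    congr 1
    apply intervalIntegral.integral_congr
    intro φ _
    simp [Real.sin_pi_div_two]
  have keyij : ∀ i j : Fin N, i < j → |legendre k ⟪x i, x j⟫| ≤ (2/Real.pi) *
      ∫ φ in (0:ℝ)..(Real.pi/2), (1 - Real.sin (θ i j)^2 * Real.cos φ^2)^((k₀:ℝ)/2) := by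
    intro i j hij
    rw [← (hθ i j hij).2]
    exact abs_leg_le' (θ i j) hk
  -- diagonal inner products are 1
  have hdiag : ∀ i : Fin N, ⟪x i, x i⟫ = (1:ℝ) := by
    intro i
    have hx : ‖x i‖ = 1 := hx_sphere i
    rw [real_inner_self_eq_norm_sq, hx, one_pow]
  -- split the sums
  have hsplit : ∀ i : Fin N, Finset.univ.filter (fun j => i ≤ j)
      = insert i (Finset.univ.filter (fun j => i < j)) := by
    intro i
    ext j
    simp only [Finset.mem_filter, Finset.mem_insert, Finset.mem_univ, true_and]
    constructor
    · intro h
      rcases eq_or_lt_of_le h with h | h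
      · exact Or.inl h.symm
      · exact Or.inr h
    · rintro (rfl | h)
      · exact le_refl _
      · exact h.le
  have hsum : (∑ i : Fin N, ∑ j ∈ Finset.univ.filter (fun j => i ≤ j),
        w i j * legendre k ⟪x i, x j⟫)
      = (∑ i : Fin N, w i i)
        + ∑ i : Fin N, ∑ j ∈ Finset.univ.filter (fun j => i < j),
            w i j * legendre k ⟪x i, x j⟫ := by
    rw [← Finset.sum_add_distrib]
    apply Finset.sum_congr rfl
    intro i _
    rw [hsplit i, Finset.sum_insert (by simp), hdiag i, legendre_one, mul_one]
  set D := ∑ i : Fin N, ∑ j ∈ Finset.univ.filter (fun j => i < j),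
      w i j * legendre k ⟪x i, x j⟫ with hD
  set A := w₀ * legendre k 0 with hA
  -- bound |A|
  have hAb : |A| ≤ (2 * |w₀| / Real.pi) *
      ∫ φ in (0:ℝ)..(Real.pi/2), (1 - Real.cos φ^2)^((k₀:ℝ)/2) := by
    rw [hA, abs_mul]
    calc |w₀| * |legendre k 0|
        ≤ |w₀| * ((2/Real.pi) * ∫ φ in (0:ℝ)..(Real.pi/2), (1 - Real.cos φ^2)^((k₀:ℝ)/2)) :=
          mul_le_mul_of_nonneg_left key0 (abs_nonneg _)
      _ = (2 * |w₀| / Real.pi) *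
            ∫ φ in (0:ℝ)..(Real.pi/2), (1 - Real.cos φ^2)^((k₀:ℝ)/2) := by ring
  -- bound |D|
  have hDb : |D| ≤ (2/Real.pi) * ∑ i : Fin N, ∑ j ∈ Finset.univ.filter (fun j => i < j),
      |w i j| * ∫ φ in (0:ℝ)..(Real.pi/2),
        (1 - Real.sin (θ i j)^2 * Real.cos φ^2)^((k₀:ℝ)/2) := by
    rw [Finset.mul_sum]
    refine (Finset.abs_sum_le_sum_abs _ _).trans (Finset.sum_le_sum fun i _ => ?_)
    rw [Finset.mul_sum]
    refine (Finset.abs_sum_le_sum_abs _ _).trans (Finset.sum_le_sum fun j hj => ?_)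
    have hij : i < j := (Finset.mem_filter.mp hj).2
    rw [abs_mul]
    calc |w i j| * |legendre k ⟪x i, x j⟫|
        ≤ |w i j| * ((2/Real.pi) * ∫ φ in (0:ℝ)..(Real.pi/2),
            (1 - Real.sin (θ i j)^2 * Real.cos φ^2)^((k₀:ℝ)/2)) :=
          mul_le_mul_of_nonneg_left (keyij i j hij) (abs_nonneg _)
      _ = (2/Real.pi) * (|w i j| * ∫ φ in (0:ℝ)..(Real.pi/2),
            (1 - Real.sin (θ i j)^2 * Real.cos φ^2)^((k₀:ℝ)/2)) := by ring
  have hAD : A + D ≥ -((∑ i : Fin N, w i i) - 1) := by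
    have h1 : A ≥ -|A| := neg_abs_le A
    have h2 : D ≥ -|D| := neg_abs_le D
    linarith
  have : w₀ * legendre k 0 + ((∑ i : Fin N, w i i) + D) ≥ 1 := by
    have : A + D ≥ -((∑ i : Fin N, w i i) - 1) := hAD
    rw [hA] at this
    linarith
  rw [ge_iff_le, hsum]
  linarith
end
end
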